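/- If f and g are u-deformed q-Appell sets with determining coefficient sequences (a_n) and (b_n) (a_0 ≠ 0, b_0 ≠ 0), i.e., f_n(x) = ∑_{k=0}^n [n choose k]_q u^{C(n-k,2)} a_k x^{n-k} and similarly for g, then the convolution product (f*g)_n(x) = ∑_{k=0}^n [n choose k]_q a_{n-k} g_k(x) is again a u-deformed q-Appell set, with determining coefficient sequence c_n = ∑_{k=0}^n [n choose k]_q a_k b_{n-k}. -/

import Mathlib

open Finset

def qNum {K : Type*} [Field K] (q : K) (n : ℕ) : K := ∑ i ∈ Finset.range n, q ^ i

def qFact {K : Type*} [Field K] (q : K) : ℕ → K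
  | 0 => 1
  | n + 1 => qFact q n * qNum q (n + 1)

def qBinom {K : Type*} [Field K] (q : K) (n k : ℕ) : K :=
  qFact q n / (qFact q k * qFact q (n - k))

/-!
Expanding `g_k` and multiplying out, both sides become sums over the triples `(i, j, m)` with
`i + j + m = n` of the same term `[n]_q! / ([i]_q! [j]_q! [m]_q!) · a_i b_j u^C(m,2) x^m`: on the left
`i = n - k` is split off first, on the right `m = n - k`. The two products of q-binomial
coefficients agree because both equal this q-trinomial coefficient.
-/

lemma qFact_ne_zero {K : Type*} [Field K] {q : K} (hq : ∀ n : ℕ, 0 < n → qNum q n ≠ 0) :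
    ∀ n, qFact q n ≠ 0
  | 0 => one_ne_zero
  | n + 1 => mul_ne_zero (qFact_ne_zero hq n) (hq (n + 1) n.succ_pos)

lemma qBinom_mul_qBinom {K : Type*} [Field K] {q : K} (n : ℕ) {k : ℕ} (hk : qFact q k ≠ 0)
    (j : ℕ) :
    qBinom q n k * qBinom q k j = qFact q n / (qFact q (n - k) * qFact q j * qFact q (k - j)) := by
  unfold qBinom
  field_simp

theorem Finset.sum_range_sum_range_rotate {M : Type*} [AddCommMonoid M] (f : ℕ → ℕ → ℕ → M)
    (n : ℕ) :
    ∑ k ∈ range (n + 1), ∑ j ∈ range (k + 1), f (n - k) j (k - j) =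
      ∑ k ∈ range (n + 1), ∑ j ∈ range (k + 1), f j (k - j) (n - k) := by
  rw [sum_sigma', sum_sigma']
  refine sum_nbij' (fun p => ⟨n - p.1 + p.2, n - p.1⟩) (fun p => ⟨n - p.2, p.1 - p.2⟩)
    ?_ ?_ ?_ ?_ ?_ <;> rintro ⟨k, j⟩ hkj <;> simp only [mem_sigma, mem_range] at hkj ⊢
  · omega
  · omega
  · rw [Sigma.mk.injEq]; exact ⟨by omega, heq_of_eq (by omega)⟩
  · rw [Sigma.mk.injEq]; exact ⟨by omega, heq_of_eq (by omega)⟩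
  · congr 1 <;> omega

/-- The convolution product of two u-deformed q-Appell sets is again a u-deformed
q-Appell set, with determining sequence the q-convolution of the two sequences. -/
theorem qAppell_convolution_closed {K : Type*} [Field K] (q u : K)
    (hq : ∀ n : ℕ, 0 < n → qNum q n ≠ 0)
    (a b : ℕ → K) (ha : a 0 ≠ 0) (hb : b 0 ≠ 0) :
    (∑ k ∈ Finset.range 1, qBinom q 0 k * a k * b (0 - k)) ≠ 0 ∧
      ∀ (n : ℕ) (x : K),
        (∑ k ∈ Finset.range (n + 1), qBinom q n k * a (n - k) *
            (∑ j ∈ Finset.range (k + 1),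
              qBinom q k j * u ^ ((k - j).choose 2) * b j * x ^ (k - j))) =
          ∑ k ∈ Finset.range (n + 1), qBinom q n k * u ^ ((n - k).choose 2) *
            (∑ j ∈ Finset.range (k + 1), qBinom q k j * a j * b (k - j)) * x ^ (n - k) := by
  refine ⟨by simpa [qBinom, qFact] using mul_ne_zero ha hb, fun n x => ?_⟩
  set t : ℕ → ℕ → ℕ → K := fun i j m =>
    qFact q n / (qFact q i * qFact q j * qFact q m) * a i * b j * (u ^ m.choose 2 * x ^ m)
  calc _ = ∑ k ∈ range (n + 1), ∑ j ∈ range (k + 1), t (n - k) j (k - j) := by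
        refine sum_congr rfl fun k _ => ?_
        rw [mul_sum]
        refine sum_congr rfl fun j _ => ?_
        simp only [t]
        linear_combination (a (n - k) * b j * (u ^ (k - j).choose 2 * x ^ (k - j))) *
          qBinom_mul_qBinom n (qFact_ne_zero hq k) j
    _ = ∑ k ∈ range (n + 1), ∑ j ∈ range (k + 1), t j (k - j) (n - k) :=
        sum_range_sum_range_rotate t n
    _ = _ := by
        refine sum_congr rfl fun k _ => ?_
        rw [mul_sum, sum_mul]
        refine sum_congr rfl fun j _ => ?_
        simp only [t]
        linear_combination (-(a j * b (k - j) * (u ^ (n - k).choose 2 * x ^ (n - k)))) *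
          qBinom_mul_qBinom n (qFact_ne_zero hq k) j
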